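/- arXiv:2308.13470 — 2 statements merged into one kernel-verified Lean document; each statement's English description precedes it below -/
import Mathlib

section
/- The value function V of the two-good problem is finite at 0: V(0) > −∞. More precisely, V(0) ≥ ∫₀^∞ e^{−ρt} [ (ℓ̲^{1−σ}/(1−σ)) · (ℓ̲(1 − e^{−φt}))^{γ(σ−1)} + B̃ (1−ℓ̄)^{1−σ}/(1−σ) ] dt, and this integral is finite. -/
open MeasureTheory Real Set Filter

/-- State trajectory `h^{h₀,ℓ}(t) = e^{−φt} h₀ + φ ∫₀ᵗ e^{−φ(t−s)} ℓ(s) ds`. -/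
noncomputable def traj (φ h₀ : ℝ) (ℓ : ℝ → ℝ) (t : ℝ) : ℝ :=
  Real.exp (-(φ * t)) * h₀ + φ * ∫ s in (0:ℝ)..t, Real.exp (-(φ * (t - s))) * ℓ s

/-- Instantaneous utility of the two-good problem:
`U(ℓ, h) = ℓ^{1−σ} h^{γ(σ−1)} / (1−σ) + B̃ (1−ℓ)^{1−σ} / (1−σ)`, with `B̃ = B^{1−σ}`. -/
noncomputable def U2 (σ γ B ℓ h : ℝ) : ℝ :=
  ℓ ^ (1 - σ) * h ^ (γ * (σ - 1)) / (1 - σ) +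
    B ^ (1 - σ) * (1 - ℓ) ^ (1 - σ) / (1 - σ)

/-- Admissible controls: measurable, with values in `[ℓ̲, ℓ̄]`. -/
def Admissible (lo hi : ℝ) (ℓ : ℝ → ℝ) : Prop :=
  Measurable ℓ ∧ ∀ t, 0 ≤ t → ℓ t ∈ Set.Icc lo hi

/-- Value function of the two-good problem. -/
noncomputable def V (ρ φ σ γ B lo hi h₀ : ℝ) : ℝ :=
  sSup {x | ∃ ℓ : ℝ → ℝ, Admissible lo hi ℓ ∧
    x = ∫ t in Set.Ioi (0:ℝ), Real.exp (-(ρ * t)) * U2 σ γ B (ℓ t) (traj φ h₀ ℓ t)}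

/-! The constant control `ℓ̲` is admissible, and from `h₀ = 0` it drives the state along
`ℓ̲ (1 - e^{-φt})`. Since `1 - σ < 0`, the leisure term is larger at `1 - ℓ̲` than at `1 - ℓ̄`,
so the payoff of this control dominates the given integral; every payoff is `≤ 0`, so `V(0)`,
a supremum of a set bounded above, dominates that payoff in turn. Finiteness holds because the
integrand is `e^{-ρt}` times a bounded function. -/

lemma integral_exp_neg_mul_sub {φ : ℝ} (hφ : φ ≠ 0) (t : ℝ) :
    ∫ s in (0:ℝ)..t, exp (-(φ * (t - s))) = (1 - exp (-(φ * t))) / φ := by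
  have hderiv : ∀ s ∈ uIcc (0:ℝ) t,
      HasDerivAt (fun u => exp (-(φ * (t - u))) / φ) (exp (-(φ * (t - s)))) s := by
    intro s _
    have := ((((hasDerivAt_id s).const_sub t).const_mul φ).neg.exp).div_const φ
    simpa [mul_div_assoc, div_self hφ] using this
  rw [intervalIntegral.integral_eq_sub_of_hasDerivAt hderiv
    (Continuous.intervalIntegrable (by fun_prop) 0 t)]
  simp [sub_div]

lemma traj_zero_const {φ : ℝ} (hφ : φ ≠ 0) (c t : ℝ) :
    traj φ 0 (fun _ => c) t = c * (1 - exp (-(φ * t))) := by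
  rw [traj, intervalIntegral.integral_mul_const, integral_exp_neg_mul_sub hφ]
  field_simp
  ring

lemma traj_nonneg {φ h₀ t : ℝ} {ℓ : ℝ → ℝ} (hφ : 0 ≤ φ) (hh₀ : 0 ≤ h₀) (ht : 0 ≤ t)
    (hℓ : ∀ s, 0 ≤ s → 0 ≤ ℓ s) : 0 ≤ traj φ h₀ ℓ t := by
  have hI : 0 ≤ ∫ s in (0:ℝ)..t, exp (-(φ * (t - s))) * ℓ s :=
    intervalIntegral.integral_nonneg ht fun s hs => mul_nonneg (exp_pos _).le (hℓ s hs.1)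
  unfold traj
  positivity

lemma U2_nonpos {σ γ B ℓ h : ℝ} (hσ : 1 ≤ σ) (hB : 0 ≤ B) (hℓ₀ : 0 ≤ ℓ) (hℓ₁ : ℓ ≤ 1)
    (hh : 0 ≤ h) : U2 σ γ B ℓ h ≤ 0 := by
  have hσ' : 1 - σ ≤ 0 := by linarith
  have hℓ₁' : 0 ≤ 1 - ℓ := by linarith
  unfold U2
  have h₁ : ℓ ^ (1 - σ) * h ^ (γ * (σ - 1)) / (1 - σ) ≤ 0 :=
    div_nonpos_of_nonneg_of_nonpos (by positivity) hσ'
  have h₂ : B ^ (1 - σ) * (1 - ℓ) ^ (1 - σ) / (1 - σ) ≤ 0 :=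
    div_nonpos_of_nonneg_of_nonpos (by positivity) hσ'
  linarith

/-- Every payoff is `≤ 0`, so the supremum defining `V` is over a set bounded above. -/
lemma payoff_le_V {ρ φ σ γ B lo hi h₀ : ℝ} (hφ : 0 ≤ φ) (hσ : 1 ≤ σ) (hB : 0 ≤ B)
    (hlo : 0 ≤ lo) (hhi : hi ≤ 1) (hh₀ : 0 ≤ h₀) {ℓ : ℝ → ℝ} (hℓ : Admissible lo hi ℓ) :
    ∫ t in Ioi (0:ℝ), exp (-(ρ * t)) * U2 σ γ B (ℓ t) (traj φ h₀ ℓ t) ≤ V ρ φ σ γ B lo hi h₀ := by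
  refine le_csSup ⟨0, ?_⟩ ⟨ℓ, hℓ, rfl⟩
  rintro _ ⟨m, ⟨-, hm⟩, rfl⟩
  refine setIntegral_nonpos measurableSet_Ioi fun t ht => ?_
  have hm₀ : ∀ s, 0 ≤ s → 0 ≤ m s := fun s hs => hlo.trans (hm s hs).1
  exact mul_nonpos_of_nonneg_of_nonpos (exp_pos _).le <|
    U2_nonpos hσ hB (hm₀ t (le_of_lt ht)) ((hm t (le_of_lt ht)).2.trans hhi)
      (traj_nonneg hφ hh₀ (le_of_lt ht) hm₀)

lemma integrableOn_exp_neg_mul_of_bounded {ρ M : ℝ} {f : ℝ → ℝ} (hρ : 0 < ρ)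
    (hf : AEStronglyMeasurable f (volume.restrict (Ioi 0))) (hM : ∀ t ∈ Ioi (0:ℝ), ‖f t‖ ≤ M) :
    IntegrableOn (fun t => exp (-(ρ * t)) * f t) (Ioi 0) := by
  have hexp : IntegrableOn (fun t => exp (-(ρ * t))) (Ioi 0) := by
    simpa only [neg_mul] using exp_neg_integrableOn_Ioi 0 hρ
  exact hexp.mul_bdd hf ((ae_restrict_mem measurableSet_Ioi).mono hM)

lemma integrableOn_exp_neg_mul_rpow_one_sub_exp {ρ φ c p : ℝ} (hρ : 0 < ρ) (hφ : 0 ≤ φ)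
    (hc : 0 ≤ c) (hp : 0 ≤ p) (A C : ℝ) :
    IntegrableOn (fun t => exp (-(ρ * t)) * (A * (c * (1 - exp (-(φ * t)))) ^ p + C))
      (Ioi 0) := by
  refine integrableOn_exp_neg_mul_of_bounded (M := |A| * c ^ p + |C|) hρ
    (by fun_prop : Measurable _).aestronglyMeasurable fun t ht => ?_
  have he₁ : exp (-(φ * t)) ≤ 1 := exp_le_one_iff.mpr (by nlinarith [mem_Ioi.mp ht])
  have hx₀ : 0 ≤ c * (1 - exp (-(φ * t))) := mul_nonneg hc (by linarith)
  have hx₁ : c * (1 - exp (-(φ * t))) ≤ c := by nlinarith [exp_pos (-(φ * t))]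
  have hxp : (c * (1 - exp (-(φ * t)))) ^ p ≤ c ^ p := rpow_le_rpow hx₀ hx₁ hp
  calc ‖A * (c * (1 - exp (-(φ * t)))) ^ p + C‖
      ≤ |A| * |(c * (1 - exp (-(φ * t)))) ^ p| + |C| := by
        rw [Real.norm_eq_abs, ← abs_mul]; exact abs_add_le _ _
    _ ≤ |A| * c ^ p + |C| := by
        rw [abs_of_nonneg (rpow_nonneg hx₀ p)]; gcongr

theorem V_finite_at_zero_general (ρ φ σ γ B lo hi : ℝ)
    (hρ : 0 < ρ) (hφ : 0 < φ) (hσ : 1 < σ) (hγ0 : 0 < γ)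
    (hB : 0 < B) (hlo : 0 < lo) (hlohi : lo ≤ hi) (hhi : hi < 1) :
    IntegrableOn
      (fun t => Real.exp (-(ρ * t)) *
        (lo ^ (1 - σ) / (1 - σ) * (lo * (1 - Real.exp (-(φ * t)))) ^ (γ * (σ - 1)) +
          B ^ (1 - σ) * (1 - hi) ^ (1 - σ) / (1 - σ)))
      (Set.Ioi (0:ℝ)) ∧
    (∫ t in Set.Ioi (0:ℝ), Real.exp (-(ρ * t)) *
        (lo ^ (1 - σ) / (1 - σ) * (lo * (1 - Real.exp (-(φ * t)))) ^ (γ * (σ - 1)) +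
          B ^ (1 - σ) * (1 - hi) ^ (1 - σ) / (1 - σ)))
      ≤ V ρ φ σ γ B lo hi 0 := by
  have hp : 0 ≤ γ * (σ - 1) := mul_nonneg hγ0.le (by linarith)
  have hint := integrableOn_exp_neg_mul_rpow_one_sub_exp hρ hφ.le hlo.le hp (lo ^ (1 - σ) / (1 - σ))
  have hleisure : B ^ (1 - σ) * (1 - hi) ^ (1 - σ) / (1 - σ)
      ≤ B ^ (1 - σ) * (1 - lo) ^ (1 - σ) / (1 - σ) :=
    div_le_div_of_nonpos_of_le (by linarith) <| mul_le_mul_of_nonneg_left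
      (rpow_le_rpow_of_nonpos (by linarith) (by linarith) (by linarith)) (by positivity)
  refine ⟨hint _, ?_⟩
  calc _ ≤ ∫ t in Ioi (0:ℝ), exp (-(ρ * t)) *
          (lo ^ (1 - σ) / (1 - σ) * (lo * (1 - exp (-(φ * t)))) ^ (γ * (σ - 1)) +
            B ^ (1 - σ) * (1 - lo) ^ (1 - σ) / (1 - σ)) :=
        setIntegral_mono_on (hint _) (hint _) measurableSet_Ioi fun t _ => by gcongr
    _ = ∫ t in Ioi (0:ℝ), exp (-(ρ * t)) *
          U2 σ γ B lo (traj φ 0 (fun _ => lo) t) := by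
        congr with t
        rw [traj_zero_const hφ.ne', U2]
        ring
    _ ≤ V ρ φ σ γ B lo hi 0 :=
        payoff_le_V hφ.le hσ.le hB.le hlo.le hhi.le le_rfl
          ⟨measurable_const, fun _ _ => ⟨le_rfl, hlohi⟩⟩

/-- `V(0) > −∞`; more precisely `V(0)` is bounded below by the (finite)
payoff integral of the constant control `ℓ̲` started at `h₀ = 0`. -/
theorem V_finite_at_zero (ρ φ σ γ B lo hi : ℝ)
    (hρ : 0 < ρ) (hφ : 0 < φ) (hσ : 1 < σ) (hγ0 : 0 < γ) (hγ1 : γ < 1)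
    (hγσ : 1 < γ * (σ - 1)) (hB : 0 < B) (hlo : 0 < lo) (hlohi : lo ≤ hi) (hhi : hi < 1) :
    IntegrableOn
      (fun t => Real.exp (-(ρ * t)) *
        (lo ^ (1 - σ) / (1 - σ) * (lo * (1 - Real.exp (-(φ * t)))) ^ (γ * (σ - 1)) +
          B ^ (1 - σ) * (1 - hi) ^ (1 - σ) / (1 - σ)))
      (Set.Ioi (0:ℝ)) ∧
    (∫ t in Set.Ioi (0:ℝ), Real.exp (-(ρ * t)) *
        (lo ^ (1 - σ) / (1 - σ) * (lo * (1 - Real.exp (-(φ * t)))) ^ (γ * (σ - 1)) +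
          B ^ (1 - σ) * (1 - hi) ^ (1 - σ) / (1 - σ)))
      ≤ V ρ φ σ γ B lo hi 0 :=
  V_finite_at_zero_general ρ φ σ γ B lo hi hρ hφ hσ hγ0 hB hlo hlohi hhi
end

section
/- The value function V of the two-good problem is continuous on [0, ∞). -/
open MeasureTheory Real Set Filter

/-! For a fixed control `ℓ`, trajectories from two initial data differ by `e^{-φt} (h₀ - h₁)`,
and trajectories from `[0, R]` stay in `[0, R + 1]`, where `h ↦ ℓ^{1-σ} h^{γ(σ-1)}` is Lipschitz
because `γ(σ-1) ≥ 1` and `ℓ ≥ ℓ̲ > 0`. So the payoffs `payoff · ℓ` are Lipschitz on `[0, R]` with a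
constant independent of `ℓ`; they are also bounded above uniformly in `ℓ`, so their supremum `V`
is Lipschitz on `[0, R]` as well. -/

lemma abs_ciSup_sub_ciSup_le {ι : Type*} [Nonempty ι] {f g : ι → ℝ} {c : ℝ}
    (hf : BddAbove (range f)) (hg : BddAbove (range g)) (h : ∀ i, |f i - g i| ≤ c) :
    |(⨆ i, f i) - ⨆ i, g i| ≤ c := by
  rw [abs_sub_le_iff, sub_le_iff_le_add, sub_le_iff_le_add]
  constructor
  · exact ciSup_le fun i => by linarith [le_ciSup hg i, (abs_sub_le_iff.1 (h i)).1]
  · exact ciSup_le fun i => by linarith [le_ciSup hf i, (abs_sub_le_iff.1 (h i)).2]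

lemma LipschitzOnWith.ciSup {ι α : Type*} [PseudoMetricSpace α] [Nonempty ι] {f : ι → α → ℝ}
    {s : Set α} {K : NNReal} (hf : ∀ i, LipschitzOnWith K (f i) s)
    (hbdd : ∀ x ∈ s, BddAbove (range fun i => f i x)) :
    LipschitzOnWith K (fun x => ⨆ i, f i x) s :=
  LipschitzOnWith.of_dist_le_mul fun x hx y hy =>
    abs_ciSup_sub_ciSup_le (hbdd x hx) (hbdd y hy) fun i => (hf i).dist_le_mul x hx y hy

lemma abs_rpow_sub_rpow_le {a M x y : ℝ} (ha : 1 ≤ a) (hx : x ∈ Icc 0 M) (hy : y ∈ Icc 0 M) :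
    |x ^ a - y ^ a| ≤ a * M ^ (a - 1) * |x - y| := by
  have hbound : ∀ z ∈ Icc 0 M, ‖a * z ^ (a - 1)‖ ≤ a * M ^ (a - 1) := fun z hz => by
    rw [norm_of_nonneg (mul_nonneg (by linarith) (rpow_nonneg hz.1 _))]
    gcongr
    · exact hz.1
    · exact hz.2
  simpa [norm_eq_abs] using (convex_Icc 0 M).norm_image_sub_le_of_norm_hasDerivWithin_le
    (fun z _ => (hasDerivAt_rpow_const (Or.inr ha)).hasDerivWithinAt) hbound hy hx

lemma integral_exp_neg_mul_Ioi_zero {ρ : ℝ} (hρ : 0 < ρ) :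
    ∫ t in Ioi (0:ℝ), exp (-(ρ * t)) = ρ⁻¹ := by
  simp_rw [← neg_mul]
  rw [integral_exp_mul_Ioi (neg_neg_of_pos hρ)]
  simp

section Trajectory

variable {φ h₀ : ℝ} {ℓ : ℝ → ℝ}

lemma traj_congr {ℓ' : ℝ → ℝ} {t : ℝ} (ht : 0 ≤ t) (h : EqOn ℓ ℓ' (Icc 0 t)) :
    traj φ h₀ ℓ t = traj φ h₀ ℓ' t := by
  unfold traj
  congr 2
  refine intervalIntegral.integral_congr fun s hs => ?_
  rw [uIcc_of_le ht] at hs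
  simp only [h hs]

lemma traj_sub_traj (h₁ t : ℝ) :
    traj φ h₀ ℓ t - traj φ h₁ ℓ t = exp (-(φ * t)) * (h₀ - h₁) := by
  unfold traj; ring

lemma traj_const (hφ : φ ≠ 0) (c t : ℝ) :
    traj φ h₀ (fun _ => c) t = exp (-(φ * t)) * h₀ + (1 - exp (-(φ * t))) * c := by
  have hderiv : ∀ s ∈ uIcc 0 t,
      HasDerivAt (fun s => exp (-(φ * (t - s))) / φ) (exp (-(φ * (t - s)))) s := by
    intro s _
    refine ((((hasDerivAt_id s).const_sub t).const_mul φ).fun_neg.exp.div_const φ).congr_deriv ?_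
    field_simp
    simp
  have hint : ∫ s in (0:ℝ)..t, exp (-(φ * (t - s))) = (1 - exp (-(φ * t))) / φ := by
    rw [intervalIntegral.integral_eq_sub_of_hasDerivAt hderiv
      ((by fun_prop : Continuous fun s => exp (-(φ * (t - s)))).intervalIntegrable _ _)]
    simp [sub_div]
  unfold traj
  rw [intervalIntegral.integral_mul_const, hint]
  field_simp

lemma intervalIntegrable_of_mem_Icc (hℓ : Measurable ℓ) (hℓ01 : ∀ s, ℓ s ∈ Icc 0 1)
    (a b : ℝ) : IntervalIntegrable ℓ volume a b :=
  (intervalIntegrable_const (c := (1:ℝ))).mono_fun hℓ.aestronglyMeasurable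
    (ae_of_all _ fun s => by simp [abs_of_nonneg (hℓ01 s).1, (hℓ01 s).2])

lemma traj_mono (hφ : 0 ≤ φ) {ℓ' : ℝ → ℝ} {t : ℝ} (ht : 0 ≤ t)
    (hℓ : IntervalIntegrable ℓ volume 0 t) (hℓ' : IntervalIntegrable ℓ' volume 0 t)
    (hle : ∀ s ∈ Icc 0 t, ℓ s ≤ ℓ' s) : traj φ h₀ ℓ t ≤ traj φ h₀ ℓ' t := by
  unfold traj
  gcongr
  exact intervalIntegral.integral_mono_on ht (hℓ.continuousOn_mul (by fun_prop))
    (hℓ'.continuousOn_mul (by fun_prop)) fun s hs => by gcongr; exact hle s hs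

lemma traj_mem_Icc (hφ : 0 < φ) (hh₀ : 0 ≤ h₀) (hℓ : Measurable ℓ)
    (hℓ01 : ∀ s, ℓ s ∈ Icc 0 1) {t : ℝ} (ht : 0 ≤ t) :
    traj φ h₀ ℓ t ∈ Icc 0 (h₀ + 1) := by
  have hint := intervalIntegrable_of_mem_Icc hℓ hℓ01 0 t
  have hexp : exp (-(φ * t)) ≤ 1 := exp_le_one_iff.2 (by nlinarith)
  constructor
  · calc 0 ≤ traj φ h₀ (fun _ => 0) t := by rw [traj_const hφ.ne']; positivity
      _ ≤ traj φ h₀ ℓ t :=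
        traj_mono hφ.le ht intervalIntegrable_const hint fun s _ => (hℓ01 s).1
  · calc traj φ h₀ ℓ t ≤ traj φ h₀ (fun _ => 1) t :=
          traj_mono hφ.le ht hint intervalIntegrable_const fun s _ => (hℓ01 s).2
      _ ≤ h₀ + 1 := by
        rw [traj_const hφ.ne']; nlinarith [exp_pos (-(φ * t))]

lemma continuous_traj (hℓ : Measurable ℓ) (hℓ01 : ∀ s, ℓ s ∈ Icc 0 1) :
    Continuous (traj φ h₀ ℓ) := by
  have htraj : traj φ h₀ ℓ = fun t =>
      exp (-(φ * t)) * (h₀ + φ * ∫ s in (0:ℝ)..t, exp (φ * s) * ℓ s) := by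
    ext t
    simp only [traj, mul_add, ← intervalIntegral.integral_const_mul, sub_eq_add_neg, neg_add,
      exp_add, mul_neg, neg_neg]
    ring_nf
  rw [htraj]
  have := intervalIntegral.continuous_primitive (μ := volume)
    (fun a b => (intervalIntegrable_of_mem_Icc hℓ hℓ01 a b).continuousOn_mul
      (g := fun s => exp (φ * s)) (by fun_prop)) 0
  fun_prop

end Trajectory

lemma abs_U2_sub_U2_le {σ γ B lo x h h' M : ℝ} (hσ : 1 < σ) (ha : 1 ≤ γ * (σ - 1))
    (hlo : 0 < lo) (hx : lo ≤ x) (hh : h ∈ Icc 0 M) (hh' : h' ∈ Icc 0 M) :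
    |U2 σ γ B x h - U2 σ γ B x h'| ≤
      lo ^ (1 - σ) * (γ * (σ - 1) * M ^ (γ * (σ - 1) - 1)) / (σ - 1) * |h - h'| := by
  have hdiff : U2 σ γ B x h - U2 σ γ B x h' =
      x ^ (1 - σ) * (h ^ (γ * (σ - 1)) - h' ^ (γ * (σ - 1))) / (1 - σ) := by
    unfold U2; ring
  have hx_pow : x ^ (1 - σ) ≤ lo ^ (1 - σ) := rpow_le_rpow_of_nonpos hlo hx (by linarith)
  rw [hdiff, abs_div, abs_mul, abs_of_pos (rpow_pos_of_pos (hlo.trans_le hx) _),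
    abs_of_neg (by linarith : 1 - σ < 0), neg_sub, div_mul_eq_mul_div, mul_assoc]
  gcongr
  exact abs_rpow_sub_rpow_le ha hh hh'

lemma exists_abs_U2_le {σ γ B lo hi M : ℝ} (ha : 0 ≤ γ * (σ - 1)) (hlo : 0 < lo)
    (hhi : hi < 1) : ∃ K, ∀ x ∈ Icc lo hi, ∀ h ∈ Icc 0 M, |U2 σ γ B x h| ≤ K := by
  have hcont : ContinuousOn (fun p : ℝ × ℝ => U2 σ γ B p.1 p.2) (Icc lo hi ×ˢ Icc 0 M) := by
    rintro p ⟨⟨hlo', hhi'⟩, -⟩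
    unfold U2
    apply ContinuousAt.continuousWithinAt
    fun_prop (disch := first | exact Or.inr ha | (left; linarith))
  obtain ⟨K, hK⟩ := (isCompact_Icc.prod isCompact_Icc).exists_bound_of_continuousOn hcont
  exact ⟨K, fun x hx h hh => hK (x, h) ⟨hx, hh⟩⟩

noncomputable def payoff (ρ φ σ γ B h₀ : ℝ) (ℓ : ℝ → ℝ) : ℝ :=
  ∫ t in Ioi (0:ℝ), exp (-(ρ * t)) * U2 σ γ B (ℓ t) (traj φ h₀ ℓ t)

lemma V_eq_iSup_payoff (ρ φ σ γ B lo hi h₀ : ℝ) :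
    V ρ φ σ γ B lo hi h₀ = ⨆ ℓ : {ℓ // Admissible lo hi ℓ}, payoff ρ φ σ γ B h₀ ℓ := by
  rw [V, ← sSup_range]
  congr
  ext x
  simp [payoff, eq_comm]

section Payoff

variable {ρ φ σ γ B lo hi h₀ : ℝ} {ℓ : ℝ → ℝ}

lemma payoff_congr {ℓ' : ℝ → ℝ} (h : EqOn ℓ ℓ' (Ici 0)) :
    payoff ρ φ σ γ B h₀ ℓ = payoff ρ φ σ γ B h₀ ℓ' :=
  setIntegral_congr_fun measurableSet_Ioi fun t ht => by
    simp only [h (mem_Ici.2 (le_of_lt ht)), traj_congr (le_of_lt ht) (h.mono Icc_subset_Ici_self)]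

-- Admissibility constrains `ℓ` only on `[0, ∞)`, the only part the payoff sees; clamping makes
-- the control bounded everywhere, hence `traj` continuous.
lemma Admissible.exists_eqOn (hℓ : Admissible lo hi ℓ) (hlohi : lo ≤ hi) :
    ∃ ℓ', Measurable ℓ' ∧ (∀ s, ℓ' s ∈ Icc lo hi) ∧ EqOn ℓ ℓ' (Ici 0) :=
  ⟨fun s => max lo (min hi (ℓ s)), by have := hℓ.1; fun_prop,
    fun s => ⟨le_max_left _ _, max_le hlohi (min_le_left _ _)⟩,
    fun s hs => by simp [(hℓ.2 s hs).1, (hℓ.2 s hs).2]⟩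

variable (hlo : 0 < lo) (hhi : hi < 1) (hℓ : Measurable ℓ) (hℓmem : ∀ s, ℓ s ∈ Icc lo hi)
include hlo hhi hℓ hℓmem

lemma measurable_payoff_integrand :
    Measurable fun t => exp (-(ρ * t)) * U2 σ γ B (ℓ t) (traj φ h₀ ℓ t) := by
  have := continuous_traj (φ := φ) (h₀ := h₀) hℓ
    fun s => Icc_subset_Icc hlo.le hhi.le (hℓmem s)
  unfold U2
  fun_prop

lemma abs_payoff_integrand_le (hφ : 0 < φ) (hh₀ : 0 ≤ h₀) {K : ℝ}
    (hK : ∀ x ∈ Icc lo hi, ∀ h ∈ Icc 0 (h₀ + 1), |U2 σ γ B x h| ≤ K) {t : ℝ} (ht : 0 ≤ t) :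
    |exp (-(ρ * t)) * U2 σ γ B (ℓ t) (traj φ h₀ ℓ t)| ≤ K * exp (-(ρ * t)) := by
  rw [abs_mul, abs_exp, mul_comm]
  gcongr
  exact hK _ (hℓmem t) _ (traj_mem_Icc hφ hh₀ hℓ
    (fun s => Icc_subset_Icc hlo.le hhi.le (hℓmem s)) ht)

lemma integrableOn_payoff_integrand (hρ : 0 < ρ) (hφ : 0 < φ) (ha : 0 ≤ γ * (σ - 1))
    (hh₀ : 0 ≤ h₀) :
    IntegrableOn (fun t => exp (-(ρ * t)) * U2 σ γ B (ℓ t) (traj φ h₀ ℓ t)) (Ioi 0) := by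
  obtain ⟨K, hK⟩ := exists_abs_U2_le (σ := σ) (B := B) (M := h₀ + 1) ha hlo hhi
  refine Integrable.mono' ((exp_neg_integrableOn_Ioi 0 hρ).const_mul K)
    (measurable_payoff_integrand hlo hhi hℓ hℓmem).aestronglyMeasurable ?_
  filter_upwards [ae_restrict_mem measurableSet_Ioi] with t ht
  simpa using abs_payoff_integrand_le hlo hhi hℓ hℓmem hφ hh₀ hK (le_of_lt ht)

lemma payoff_le (hρ : 0 < ρ) (hφ : 0 < φ) (hh₀ : 0 ≤ h₀) {K : ℝ}
    (hK : ∀ x ∈ Icc lo hi, ∀ h ∈ Icc 0 (h₀ + 1), |U2 σ γ B x h| ≤ K) :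
    payoff ρ φ σ γ B h₀ ℓ ≤ K / ρ := by
  rw [payoff]
  refine (le_abs_self _).trans ?_
  rw [← norm_eq_abs]
  refine (norm_integral_le_of_norm_le ((exp_neg_integrableOn_Ioi 0 hρ).const_mul K)
    (ae_restrict_of_forall_mem measurableSet_Ioi fun t ht => ?_)).trans_eq ?_
  · simpa using abs_payoff_integrand_le hlo hhi hℓ hℓmem hφ hh₀ hK (le_of_lt ht)
  · simp only [integral_const_mul, neg_mul]
    rw [integral_exp_neg_mul_Ioi_zero hρ, div_eq_mul_inv]

lemma abs_payoff_sub_payoff_le (hρ : 0 < ρ) (hφ : 0 < φ) (hσ : 1 < σ)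
    (ha : 1 ≤ γ * (σ - 1)) {h₁ R : ℝ} (hh₀ : h₀ ∈ Icc 0 R) (hh₁ : h₁ ∈ Icc 0 R) :
    |payoff ρ φ σ γ B h₀ ℓ - payoff ρ φ σ γ B h₁ ℓ| ≤
      lo ^ (1 - σ) * (γ * (σ - 1) * (R + 1) ^ (γ * (σ - 1) - 1)) / (σ - 1) / ρ * |h₀ - h₁| := by
  set L := lo ^ (1 - σ) * (γ * (σ - 1) * (R + 1) ^ (γ * (σ - 1) - 1)) / (σ - 1)
  have hL : 0 ≤ L := div_nonneg (mul_nonneg (rpow_nonneg hlo.le _) (mul_nonneg (by linarith)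
    (rpow_nonneg (by linarith [hh₀.1, hh₀.2]) _))) (by linarith)
  have hℓ01 : ∀ s, ℓ s ∈ Icc 0 1 := fun s => Icc_subset_Icc hlo.le hhi.le (hℓmem s)
  have htraj_mem : ∀ {h : ℝ}, h ∈ Icc 0 R → ∀ {t : ℝ}, 0 ≤ t → traj φ h ℓ t ∈ Icc 0 (R + 1) :=
    fun hh _ ht => Icc_subset_Icc_right (by linarith [hh.2]) (traj_mem_Icc hφ hh.1 hℓ hℓ01 ht)
  rw [payoff, payoff, ← integral_sub
    (integrableOn_payoff_integrand hlo hhi hℓ hℓmem hρ hφ (by linarith) hh₀.1)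
    (integrableOn_payoff_integrand hlo hhi hℓ hℓmem hρ hφ (by linarith) hh₁.1), ← norm_eq_abs]
  refine (norm_integral_le_of_norm_le ((exp_neg_integrableOn_Ioi 0 hρ).const_mul (L * |h₀ - h₁|))
    (ae_restrict_of_forall_mem measurableSet_Ioi fun t ht => ?_)).trans_eq ?_
  · have ht : 0 ≤ t := le_of_lt ht
    have htraj_sub : |traj φ h₀ ℓ t - traj φ h₁ ℓ t| ≤ |h₀ - h₁| := by
      rw [traj_sub_traj, abs_mul, abs_exp]
      exact mul_le_of_le_one_left (abs_nonneg _) (exp_le_one_iff.2 (by nlinarith))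
    rw [← mul_sub, norm_mul, norm_of_nonneg (exp_pos _).le, norm_eq_abs, neg_mul, mul_comm]
    gcongr
    calc |U2 σ γ B (ℓ t) (traj φ h₀ ℓ t) - U2 σ γ B (ℓ t) (traj φ h₁ ℓ t)|
        ≤ L * |traj φ h₀ ℓ t - traj φ h₁ ℓ t| :=
          abs_U2_sub_U2_le hσ ha hlo (hℓmem t).1 (htraj_mem hh₀ ht) (htraj_mem hh₁ ht)
      _ ≤ L * |h₀ - h₁| := by gcongr
  · simp only [integral_const_mul, neg_mul]
    rw [integral_exp_neg_mul_Ioi_zero hρ]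
    ring

end Payoff

section ValueFunction

variable {ρ φ σ γ B lo hi : ℝ} (hρ : 0 < ρ) (hφ : 0 < φ) (hlo : 0 < lo) (hlohi : lo ≤ hi)
  (hhi : hi < 1)
include hρ hφ hlo hlohi hhi

lemma bddAbove_range_payoff (ha : 0 ≤ γ * (σ - 1)) {h₀ : ℝ} (hh₀ : 0 ≤ h₀) :
    BddAbove (range fun ℓ : {ℓ // Admissible lo hi ℓ} => payoff ρ φ σ γ B h₀ ℓ) := by
  obtain ⟨K, hK⟩ := exists_abs_U2_le (σ := σ) (B := B) (M := h₀ + 1) ha hlo hhi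
  refine ⟨K / ρ, forall_mem_range.2 fun ℓ => ?_⟩
  obtain ⟨ℓ', hℓ', hℓ'mem, hEq⟩ := ℓ.2.exists_eqOn hlohi
  rw [payoff_congr hEq]
  exact payoff_le hlo hhi hℓ' hℓ'mem hρ hφ hh₀ hK

lemma exists_lipschitzOnWith_V (hσ : 1 < σ) (ha : 1 ≤ γ * (σ - 1)) (R : ℝ) :
    ∃ K, LipschitzOnWith K (V ρ φ σ γ B lo hi) (Icc 0 R) := by
  have : Nonempty {ℓ // Admissible lo hi ℓ} :=
    ⟨⟨fun _ => lo, measurable_const, fun _ _ => ⟨le_rfl, hlohi⟩⟩⟩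
  rw [funext (V_eq_iSup_payoff ρ φ σ γ B lo hi)]
  exact ⟨_, LipschitzOnWith.ciSup (fun ℓ => LipschitzOnWith.of_dist_le' fun h₀ hh₀ h₁ hh₁ => by
    obtain ⟨ℓ', hℓ', hℓ'mem, hEq⟩ := ℓ.2.exists_eqOn hlohi
    rw [Real.dist_eq, Real.dist_eq, payoff_congr hEq, payoff_congr hEq]
    exact abs_payoff_sub_payoff_le hlo hhi hℓ' hℓ'mem hρ hφ hσ ha hh₀ hh₁)
    fun h hh => bddAbove_range_payoff hρ hφ hlo hlohi hhi (by linarith) hh.1⟩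

end ValueFunction

theorem V_continuousOn_general (ρ φ σ γ B lo hi : ℝ)
    (hρ : 0 < ρ) (hφ : 0 < φ) (hσ : 1 < σ)
    (hγσ : 1 < γ * (σ - 1)) (hlo : 0 < lo) (hlohi : lo ≤ hi) (hhi : hi < 1) :
    ContinuousOn (V ρ φ σ γ B lo hi) (Set.Ici (0:ℝ)) := by
  refine LocallyLipschitzOn.continuousOn fun x _ => ?_
  obtain ⟨K, hK⟩ := exists_lipschitzOnWith_V hρ hφ hlo hlohi hhi hσ hγσ.le (x + 1)
  refine ⟨K, Icc 0 (x + 1), mem_nhdsWithin_iff_exists_mem_nhds_inter.2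
    ⟨Iio (x + 1), Iio_mem_nhds (by linarith), fun y hy => ⟨hy.2, hy.1.le⟩⟩, hK⟩

/-- the value function `V` of the two-good problem is continuous on `[0, ∞)`. -/
theorem V_continuousOn (ρ φ σ γ B lo hi : ℝ)
    (hρ : 0 < ρ) (hφ : 0 < φ) (hσ : 1 < σ) (hγ0 : 0 < γ) (hγ1 : γ < 1)
    (hγσ : 1 < γ * (σ - 1)) (hB : 0 < B) (hlo : 0 < lo) (hlohi : lo ≤ hi) (hhi : hi < 1) :
    ContinuousOn (V ρ φ σ γ B lo hi) (Set.Ici (0:ℝ)) :=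
  V_continuousOn_general ρ φ σ γ B lo hi hρ hφ hσ hγσ hlo hlohi hhi
end
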